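/- Let G be a strongly connected digraph and let u and v be two vertices that are not 2-edge-connected. Then there exists an edge e of G such that every path from u to v in G contains e, or every path from v to u in G contains e; moreover, any such edge e is a strong bridge of G. -/

import Mathlib

/-!  Basic notions for finite directed graphs given by an edge set `E : Set (V × V)`. -/

variable {V : Type*}

/-- A path from `u` to `v`: a nonempty list of vertices starting at `u`, ending at `v`,
in which every pair of consecutive vertices is an edge. -/
def IsPath (E : Set (V × V)) (u v : V) (p : List V) : Prop :=
  p.Chain' (fun a b => (a, b) ∈ E) ∧ p.head? = some u ∧ p.getLast? = some v

/-- `v` is reachable from `u` by a path. -/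
def Reach (E : Set (V × V)) (u v : V) : Prop := ∃ p, IsPath E u v p

/-- Every vertex reaches every other vertex. -/
def StronglyConnected (E : Set (V × V)) : Prop := ∀ u v, Reach E u v

/-- An edge `e` is a strong bridge if its removal destroys strong connectivity. -/
def StrongBridge (E : Set (V × V)) (e : V × V) : Prop :=
  e ∈ E ∧ ¬ StronglyConnected (E \ {e})

/-- `u` dominates `v` in the flow graph with start vertex `s`:
every path from `s` to `v` contains `u`. -/
def Dominates (E : Set (V × V)) (s u v : V) : Prop :=
  ∀ p, IsPath E s v p → u ∈ p

/-- An edge `e = (e.1, e.2)` is a bridge of the flow graph `G_s`: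
every path from `s` to `e.2` contains the edge `e`. -/
def FlowBridge (E : Set (V × V)) (s : V) (e : V × V) : Prop :=
  e ∈ E ∧ ∀ p, IsPath E s e.2 p → [e.1, e.2] <:+: p

/-- The reverse digraph: all edges reversed. -/
def rev (E : Set (V × V)) : Set (V × V) := {e | (e.2, e.1) ∈ E}

/-- `D(v)`: the set of vertices dominated by `v` in `G_s`. -/
def Dset (E : Set (V × V)) (s v : V) : Set V := {w | Dominates E s v w}

/-- Reachability inside the induced subgraph `G[S]`: a path all of whose vertices lie in `S`. -/
def ReachableIn (E : Set (V × V)) (S : Set V) (u v : V) : Prop :=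
  ∃ p, IsPath E u v p ∧ ∀ w ∈ p, w ∈ S

/-- `C` is a strongly connected component of the induced subgraph `G[S]`. -/
def SCCIn (E : Set (V × V)) (S : Set V) (C : Set V) : Prop :=
  C.Nonempty ∧ C ⊆ S ∧
  (∀ u ∈ C, ∀ v ∈ C, ReachableIn E S u v) ∧
  (∀ v ∈ S, ∀ u ∈ C, ReachableIn E S u v → ReachableIn E S v u → v ∈ C)

/-- A bridge-dominated component: an SCC of `G[D(v)]` for some bridge `(u,v)` of `G_s`. -/
def BridgeDomComponent (E : Set (V × V)) (s : V) (C : Set V) : Prop :=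
  ∃ u v, FlowBridge E s (u, v) ∧ SCCIn E (Dset E s v) C

/-- The set of edges used by a path `p`. -/
def pathEdges (p : List V) : Set (V × V) := {e | [e.1, e.2] <:+: p}

/-- `u` and `v` are `2`-edge-connected: there are two edge-disjoint paths from `u` to `v`
and two edge-disjoint paths from `v` to `u`. -/
def TwoEdgeConnected (E : Set (V × V)) (u v : V) : Prop :=
  (∃ p q, IsPath E u v p ∧ IsPath E u v q ∧ pathEdges p ∩ pathEdges q = ∅) ∧
  (∃ p q, IsPath E v u p ∧ IsPath E v u q ∧ pathEdges p ∩ pathEdges q = ∅)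

/-- `u` is the immediate dominator of `v` in `G_s`: a proper dominator of `v`
dominated by every proper dominator of `v`. -/
def ImmDom (E : Set (V × V)) (s u v : V) : Prop :=
  Dominates E s u v ∧ u ≠ v ∧
  ∀ w, Dominates E s w v → w ≠ v → Dominates E s w u

/-- `depth v = |Dom(v)|`, the number of dominators of `v` in `G_s`. -/
noncomputable def depth (E : Set (V × V)) (s v : V) : ℕ :=
  {u | Dominates E s u v}.ncard

/-- `z` is the nearest common ancestor of `x` and `y` in the dominator tree of `G_s`:
a common dominator of `x` and `y` dominated by every common dominator. -/
def IsNCA (E : Set (V × V)) (s x y z : V) : Prop :=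
  Dominates E s z x ∧ Dominates E s z y ∧
  ∀ w, Dominates E s w x → Dominates E s w y → Dominates E s w z

/-- `r` is the bridge-decomposition root of `v` in `G_s`: the deepest dominator `r`
of `v` such that `r = s` or `(d(r), r)` is a bridge of `G_s`. -/
def IsBDRoot (E : Set (V × V)) (s v r : V) : Prop :=
  Dominates E s r v ∧
  (r = s ∨ ∃ u, ImmDom E s u r ∧ FlowBridge E s (u, r)) ∧
  ∀ r', Dominates E s r' v →
    (r' = s ∨ ∃ u', ImmDom E s u' r' ∧ FlowBridge E s (u', r')) →
    Dominates E s r' r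


/-!
Menger's theorem for two edge-disjoint paths, by a single augmenting step. Fix a simple path `P`
from `u` to `v` and let the residual graph keep the edges off `P` and reverse those on `P`.

If the residual graph has a path `Q` from `u` to `v`, the edges of `P` and `Q`, after cancelling
each edge of `P` that `Q` traverses backwards, carry a net out-flow of `2` at `u`, `-2` at `v` and
`0` elsewhere; such an edge set contains a path from `u` to `v`, and after removing it a second
one.

Otherwise let `S` be the set of vertices that cannot reach `v` in the residual graph. It contains
`u` and is closed under residual edges, so `P`, whose reversed edges are residual, leaves `S`
exactly once; every other edge leaving `S` would be residual, hence every path from `u` to `v`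
uses that edge of `P`. Removing an edge that lies on all such paths disconnects `u` from `v`, so it
is a strong bridge.
-/

lemma isChain_iff_forall_mem_pathEdges {R : V → V → Prop} {p : List V} :
    p.IsChain R ↔ ∀ e ∈ pathEdges p, R e.1 e.2 :=
  ⟨fun h _ he => List.isChain_pair.1 (h.infix he),
    fun h => (List.isChain_isInfix p).imp fun a b hab => h (a, b) hab⟩

lemma pathEdges_cons_cons (a b : V) (t : List V) :
    pathEdges (a :: b :: t) = insert (a, b) (pathEdges (b :: t)) := by
  ext e
  simp [pathEdges, List.infix_cons_iff (l₂ := b :: t), Prod.ext_iff]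

namespace IsPath

variable {E : Set (V × V)} {u v : V} {p : List V}

lemma pathEdges_subset (hp : IsPath E u v p) : pathEdges p ⊆ E :=
  fun e he => isChain_iff_forall_mem_pathEdges.1 hp.1 e he

lemma mono {E' : Set (V × V)} (hp : IsPath E u v p) (hE : E ⊆ E') : IsPath E' u v p :=
  ⟨hp.1.imp fun _ _ hab => hE hab, hp.2⟩

lemma exists_eq_cons (hp : IsPath E u v p) : ∃ t, p = u :: t :=
  List.head?_eq_some_iff.1 hp.2.1

lemma end_mem (hp : IsPath E u v p) : v ∈ p :=
  List.mem_of_getLast? hp.2.2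

lemma singleton (E : Set (V × V)) (u : V) : IsPath E u u [u] :=
  ⟨List.isChain_singleton u, rfl, rfl⟩

lemma cons {x : V} (hxu : (x, u) ∈ E) (hp : IsPath E u v p) : IsPath E x v (x :: p) := by
  obtain ⟨t, rfl⟩ := hp.exists_eq_cons
  exact ⟨List.isChain_cons_cons.2 ⟨hxu, hp.1⟩, rfl, by simpa using hp.2.2⟩

lemma of_cons_cons {x y : V} {t : List V} (hp : IsPath E u v (x :: y :: t)) :
    (x, y) ∈ E ∧ IsPath E y v (y :: t) := by
  obtain ⟨hc, -, hl⟩ := hp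
  have hc := List.isChain_cons_cons.1 hc
  exact ⟨hc.1, hc.2, rfl, by simpa using hl⟩

lemma suffix {x : V} {l₁ l₂ : List V} (hp : IsPath E u v (l₁ ++ x :: l₂)) :
    IsPath E x v (x :: l₂) :=
  ⟨hp.1.suffix (List.suffix_append _ _), rfl, by simpa [List.getLast?_append] using hp.2.2⟩

end IsPath

namespace Reach

variable {E : Set (V × V)} {u v : V}

lemma mono {E' : Set (V × V)} (h : Reach E u v) (hE : E ⊆ E') : Reach E' u v :=
  let ⟨p, hp⟩ := h; ⟨p, hp.mono hE⟩

lemma cons {x : V} (hxu : (x, u) ∈ E) (h : Reach E u v) : Reach E x v :=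
  let ⟨p, hp⟩ := h; ⟨x :: p, hp.cons hxu⟩

lemma exists_nodup (h : Reach E u v) : ∃ p, IsPath E u v p ∧ p.Nodup := by
  obtain ⟨p, hp⟩ := h
  induction p generalizing u with
  | nil => simp [IsPath] at hp
  | cons x t ih =>
    obtain rfl : x = u := Option.some.inj hp.2.1
    cases t with
    | nil => exact ⟨[x], hp, List.nodup_singleton x⟩
    | cons y t =>
      obtain ⟨hxy, hyt⟩ := hp.of_cons_cons
      obtain ⟨q, hq, hqnd⟩ := ih hyt
      by_cases hxq : x ∈ q
      · obtain ⟨l₁, l₂, rfl⟩ := List.append_of_mem hxq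
        exact ⟨x :: l₂, hq.suffix, hqnd.sublist (List.sublist_append_right _ _)⟩
      · exact ⟨x :: q, hq.cons hxy, List.nodup_cons.2 ⟨hxq, hqnd⟩⟩

end Reach

lemma not_reach_sdiff_singleton {E : Set (V × V)} {u v : V} {e : V × V}
    (h : ∀ p, IsPath E u v p → e ∈ pathEdges p) : ¬ Reach (E \ {e}) u v :=
  fun ⟨p, hp⟩ => (hp.pathEdges_subset (h p (hp.mono Set.sdiff_subset))).2 rfl

section Crossing

variable {E : Set (V × V)} {S : Set V} {u v : V} {p : List V}

lemma IsPath.exists_mem_pathEdges_crossing (hp : IsPath E u v p) (hu : u ∈ S) (hv : v ∉ S) :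
    ∃ e ∈ pathEdges p, e.1 ∈ S ∧ e.2 ∉ S := by
  by_contra! hclosed
  have hchain : p.IsChain fun a b => a ∈ S → b ∈ S :=
    isChain_iff_forall_mem_pathEdges.2 hclosed
  obtain ⟨t, rfl⟩ := hp.exists_eq_cons
  exact hv (hchain.induction (· ∈ S) _ (fun _ _ hab ha => hab ha) (fun _ => hu) v hp.end_mem)

lemma eq_of_mem_pathEdges_crossing (hclosed : ∀ e ∈ pathEdges p, e.2 ∈ S → e.1 ∈ S)
    {e f : V × V} (he : e ∈ pathEdges p) (he₁ : e.1 ∈ S) (he₂ : e.2 ∉ S)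
    (hf : f ∈ pathEdges p) (hf₁ : f.1 ∈ S) (hf₂ : f.2 ∉ S) : f = e := by
  obtain ⟨l₁, l₂, rfl⟩ := he
  have hsplit : l₁ ++ [e.1, e.2] ++ l₂ = (l₁ ++ [e.1]) ++ (e.2 :: l₂) := by simp
  have hchain : (l₁ ++ [e.1, e.2] ++ l₂).IsChain fun a b => b ∈ S → a ∈ S :=
    isChain_iff_forall_mem_pathEdges.2 hclosed
  rw [hsplit, List.isChain_append] at hchain
  have hin : ∀ x ∈ l₁ ++ [e.1], x ∈ S :=
    hchain.1.backwards_induction (· ∈ S) _ (fun _ _ hab hb => hab hb) (fun _ => by simpa using he₁)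
  have hout : ∀ x ∈ e.2 :: l₂, x ∉ S :=
    hchain.2.1.induction (· ∉ S) _ (fun _ _ hab ha hb => ha (hab hb)) (fun _ => he₂)
  have hcross : (l₁ ++ [e.1] ++ e.2 :: l₂).IsChain fun a b => a ∈ S → b ∉ S → (a, b) = e := by
    refine List.isChain_append.2 ⟨?_, ?_, ?_⟩
    · exact (List.isChain_isInfix _).imp_of_mem_imp fun a b _ hb _ _ hb' => (hb' (hin b hb)).elim
    · exact (List.isChain_isInfix _).imp_of_mem_imp fun a b ha _ _ ha' => (hout a ha ha').elim
    · simp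
  rw [hsplit] at hf
  exact isChain_iff_forall_mem_pathEdges.1 hcross f hf hf₁ hf₂

end Crossing

def residualEdges (E : Set (V × V)) (P : List V) : Set (V × V) :=
  (E \ pathEdges P) ∪ rev (pathEdges P)

lemma exists_forall_mem_pathEdges_of_not_reach_residualEdges {E : Set (V × V)} {u v : V}
    {P : List V} (hP : IsPath E u v P) (hres : ¬ Reach (residualEdges E P) u v) :
    ∃ e ∈ E, ∀ p, IsPath E u v p → e ∈ pathEdges p := by
  set S : Set V := {x | ¬ Reach (residualEdges E P) x v}
  have hclosed : ∀ x y, (x, y) ∈ residualEdges E P → x ∈ S → y ∈ S :=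
    fun x y hxy hx hy => hx (hy.cons hxy)
  have hv : v ∉ S := fun hv => hv ⟨[v], IsPath.singleton _ v⟩
  obtain ⟨e, heP, he₁, he₂⟩ := hP.exists_mem_pathEdges_crossing hres hv
  refine ⟨e, hP.pathEdges_subset heP, fun p hp => ?_⟩
  obtain ⟨f, hfp, hf₁, hf₂⟩ := hp.exists_mem_pathEdges_crossing hres hv
  have hfP : f ∈ pathEdges P := by
    by_contra hfP
    exact hf₂ (hclosed f.1 f.2 (Or.inl ⟨hp.pathEdges_subset hfp, hfP⟩) hf₁)
  have hPclosed : ∀ g ∈ pathEdges P, g.2 ∈ S → g.1 ∈ S :=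
    fun g hg => hclosed g.2 g.1 (Or.inr hg)
  rwa [← eq_of_mem_pathEdges_crossing hPclosed heP he₁ he₂ hfP hf₁ hf₂]

section Divergence

variable [DecidableEq V]

def divergence (F : Finset (V × V)) : V → ℤ :=
  ∑ e ∈ F, (Pi.single e.1 1 - Pi.single e.2 1)

lemma divergence_image_swap (F : Finset (V × V)) :
    divergence (F.image Prod.swap) = -divergence F := by
  rw [divergence, Finset.sum_image fun _ _ _ _ h => Prod.swap_injective h, divergence,
    ← Finset.sum_neg_distrib]
  simp

def pathEdgeFinset (p : List V) : Finset (V × V) := p.consecutivePairs.toFinset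

lemma mem_pathEdgeFinset {p : List V} {e : V × V} :
    e ∈ pathEdgeFinset p ↔ e ∈ pathEdges p := by
  rw [pathEdgeFinset, List.mem_toFinset]
  induction p with
  | nil => simp [pathEdges]
  | cons a t ih =>
    cases t with
    | nil => exact ⟨by simp [List.consecutivePairs], fun h => by simpa using h.length_le⟩
    | cons b t =>
      rw [pathEdges_cons_cons, Set.mem_insert_iff, ← ih]
      simp [List.consecutivePairs]

lemma divergence_pathEdgeFinset {E : Set (V × V)} {u v : V} {p : List V}
    (hp : IsPath E u v p) (hnd : p.Nodup) :
    divergence (pathEdgeFinset p) = Pi.single u 1 - Pi.single v 1 := by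
  induction p generalizing u with
  | nil => simp [IsPath] at hp
  | cons x t ih =>
    obtain rfl : x = u := Option.some.inj hp.2.1
    cases t with
    | nil =>
      obtain rfl : x = v := Option.some.inj hp.2.2
      simp [divergence, pathEdgeFinset, List.consecutivePairs]
    | cons y t =>
      have hnotin : (x, y) ∉ pathEdgeFinset (y :: t) := fun h =>
        (List.nodup_cons.1 hnd).1 ((mem_pathEdgeFinset.1 h).subset (List.mem_cons_self ..))
      have hins : pathEdgeFinset (x :: y :: t) = insert (x, y) (pathEdgeFinset (y :: t)) := by
        simp [pathEdgeFinset, List.consecutivePairs]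
      rw [hins, divergence, Finset.sum_insert hnotin, ← divergence,
        ih hp.of_cons_cons.2 hnd.of_cons]
      abel

/-- Greedy walk: an edge leaving `x` exists because `x` has positive divergence, and removing it
keeps the divergence nonnegative away from `v` and positive at its head. -/
lemma reach_of_divergence {v : V} (F : Finset (V × V)) {x : V}
    (hF : ∀ y ≠ v, 0 ≤ divergence F y) (hx : x ≠ v → 0 < divergence F x) : Reach F x v := by
  induction F using Finset.strongInduction generalizing x with
  | H F ih =>
  by_cases hxv : x = v
  · exact hxv ▸ ⟨[x], IsPath.singleton _ x⟩
  obtain ⟨y, hxy⟩ : ∃ y, (x, y) ∈ F := by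
    by_contra! h
    refine (hx hxv).not_ge ?_
    rw [divergence, Finset.sum_apply]
    refine Finset.sum_nonpos fun e he => ?_
    have hex : x ≠ e.1 := fun hx => h e.2 (hx ▸ he)
    simp only [Pi.sub_apply, Pi.single_apply, if_neg hex]
    split_ifs <;> norm_num
  have hF' : ∀ w, divergence F w = divergence (F.erase (x, y)) w +
      ((if w = x then 1 else 0) - if w = y then 1 else 0) := by
    intro w
    rw [divergence, divergence, ← Finset.sum_erase_add _ _ hxy]
    simp [Pi.single_apply]
  have hx' := hx hxv
  have hreach : Reach (F.erase (x, y)) y v := by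
    refine ih _ (Finset.erase_ssubset hxy) (fun w hw => ?_) (fun hyv => ?_)
    · have hw' := hF' w; have := hF w hw
      split_ifs at hw' <;> subst_vars <;> omega
    · have hy' := hF' y; have := hF y hyv
      rw [if_pos rfl] at hy'
      split_ifs at hy' <;> subst_vars <;> omega
  exact (hreach.mono (Finset.coe_subset.2 (Finset.erase_subset _ _))).cons hxy

lemma reach_of_divergence_eq_nsmul {u v : V} {F : Finset (V × V)} {k : ℕ} (hk : k ≠ 0)
    (hF : divergence F = k • (Pi.single u 1 - Pi.single v 1)) : Reach F u v := by
  refine reach_of_divergence F (fun y hy => ?_) (fun huv => ?_)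
  · simp only [hF, Pi.smul_apply, Pi.sub_apply, Pi.single_apply, if_neg hy]
    split_ifs <;> simp
  · simp [hF, huv, Nat.pos_of_ne_zero hk]

lemma exists_edgeDisjoint_paths_of_divergence {u v : V} {F : Finset (V × V)}
    (hF : divergence F = 2 • (Pi.single u 1 - Pi.single v 1)) :
    ∃ p q, IsPath F u v p ∧ IsPath F u v q ∧ pathEdges p ∩ pathEdges q = ∅ := by
  obtain ⟨p, hp, hpnd⟩ := (reach_of_divergence_eq_nsmul two_ne_zero hF).exists_nodup
  have hsub : pathEdgeFinset p ⊆ F := fun e he => hp.pathEdges_subset (mem_pathEdgeFinset.1 he)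
  have hF' : divergence (F \ pathEdgeFinset p) = 1 • (Pi.single u 1 - Pi.single v 1) := by
    rw [divergence, Finset.sum_sdiff_eq_sub hsub, ← divergence, ← divergence, hF,
      divergence_pathEdgeFinset hp hpnd]
    abel
  obtain ⟨q, hq⟩ := reach_of_divergence_eq_nsmul one_ne_zero hF'
  refine ⟨p, q, hp, hq.mono (by simp), Set.eq_empty_iff_forall_notMem.2 fun e ⟨hep, heq⟩ => ?_⟩
  exact (Finset.mem_sdiff.1 (hq.pathEdges_subset heq)).2 (mem_pathEdgeFinset.2 hep)

end Divergence

lemma exists_edgeDisjoint_paths_of_reach_residualEdges {E : Set (V × V)} {u v : V} {P : List V}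
    (hP : IsPath E u v P) (hPnd : P.Nodup) (hres : Reach (residualEdges E P) u v) :
    ∃ p q, IsPath E u v p ∧ IsPath E u v q ∧ pathEdges p ∩ pathEdges q = ∅ := by
  classical
  obtain ⟨Q, hQ, hQnd⟩ := hres.exists_nodup
  set SP := pathEdgeFinset P
  set SQ := pathEdgeFinset Q
  set QF := SQ.filter (· ∈ E \ pathEdges P)
  set QB := SQ.filter (· ∉ E \ pathEdges P)
  set F := (SP ∪ QF) \ QB.image Prod.swap
  have hQB : QB.image Prod.swap ⊆ SP := by
    intro _ hswap
    obtain ⟨e, he, rfl⟩ := Finset.mem_image.1 hswap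
    obtain ⟨heQ, heP⟩ := Finset.mem_filter.1 he
    have := hQ.pathEdges_subset (mem_pathEdgeFinset.1 heQ)
    exact mem_pathEdgeFinset.2 (this.resolve_left heP)
  have hdisj : Disjoint SP QF := Finset.disjoint_left.2 fun e heP heQ =>
    (Finset.mem_filter.1 heQ).2.2 (mem_pathEdgeFinset.1 heP)
  have hFE : (F : Set (V × V)) ⊆ E := by
    intro e he
    rcases Finset.mem_union.1 (Finset.mem_sdiff.1 he).1 with heP | heQ
    · exact hP.pathEdges_subset (mem_pathEdgeFinset.1 heP)
    · exact (Finset.mem_filter.1 heQ).2.1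
  have hdiv : divergence F = 2 • (Pi.single u 1 - Pi.single v 1) :=
    calc divergence F = divergence SP + divergence QF - divergence (QB.image Prod.swap) := by
          rw [divergence, Finset.sum_sdiff_eq_sub (hQB.trans Finset.subset_union_left),
            Finset.sum_union hdisj]; rfl
      _ = divergence SP + (divergence QF + divergence QB) := by
          rw [divergence_image_swap]; abel
      _ = divergence SP + divergence SQ := by
          congr 1; exact Finset.sum_filter_add_sum_filter_not SQ _ _
      _ = 2 • (Pi.single u 1 - Pi.single v 1) := by
          rw [divergence_pathEdgeFinset hP hPnd, divergence_pathEdgeFinset hQ hQnd]; abel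
  obtain ⟨p, q, hp, hq, hpq⟩ := exists_edgeDisjoint_paths_of_divergence hdiv
  exact ⟨p, q, hp.mono hFE, hq.mono hFE, hpq⟩

theorem exists_edgeDisjoint_paths_or_forall_mem_pathEdges {E : Set (V × V)} {u v : V}
    (h : Reach E u v) :
    (∃ p q, IsPath E u v p ∧ IsPath E u v q ∧ pathEdges p ∩ pathEdges q = ∅) ∨
      ∃ e ∈ E, ∀ p, IsPath E u v p → e ∈ pathEdges p := by
  obtain ⟨P, hP, hPnd⟩ := h.exists_nodup
  by_cases hres : Reach (residualEdges E P) u v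
  · exact Or.inl (exists_edgeDisjoint_paths_of_reach_residualEdges hP hPnd hres)
  · exact Or.inr (exists_forall_mem_pathEdges_of_not_reach_residualEdges hP hres)

/-- if `u` and `v` are not 2-edge-connected then there is an edge `e`
contained in all paths from `u` to `v` or in all paths from `v` to `u`; moreover any
such edge is a strong bridge of `G`. -/
theorem stmt16 {V : Type*} (E : Set (V × V)) (u v : V)
    (hSC : StronglyConnected E)
    (h : ¬ TwoEdgeConnected E u v) :
    (∃ e ∈ E, (∀ p, IsPath E u v p → [e.1, e.2] <:+: p) ∨
              (∀ p, IsPath E v u p → [e.1, e.2] <:+: p)) ∧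
    (∀ e ∈ E, ((∀ p, IsPath E u v p → [e.1, e.2] <:+: p) ∨
               (∀ p, IsPath E v u p → [e.1, e.2] <:+: p)) →
      StrongBridge E e) := by
  refine ⟨?_, fun e he hall => ⟨he, fun hSC' => ?_⟩⟩
  · rcases exists_edgeDisjoint_paths_or_forall_mem_pathEdges (hSC u v) with huv | ⟨e, he, huv⟩
    · rcases exists_edgeDisjoint_paths_or_forall_mem_pathEdges (hSC v u) with hvu | ⟨e, he, hvu⟩
      · exact absurd ⟨huv, hvu⟩ h
      · exact ⟨e, he, Or.inr hvu⟩
    · exact ⟨e, he, Or.inl huv⟩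
  · rcases hall with huv | hvu
    · exact not_reach_sdiff_singleton huv (hSC' u v)
    · exact not_reach_sdiff_singleton hvu (hSC' v u)
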